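/- Let A be a V×V-matrix over a field and Z ⊆ V with A[Z,Z] nonsingular. Then for each natural number i, the number of pairs (X,Y) with X,Y ⊆ V such that the nullity of A[X,Y] equals i is the same as the number of pairs (X,Y) with X,Y ⊆ V such that the nullity of (A*Z)[X,Y] equals i. -/
import Mathlib


open Matrix
open scoped symmDiff

variable {V F : Type*} [Fintype V] [DecidableEq V] [Field F]

/-- Nullity of a matrix: dimension of the kernel of the associated linear map. -/
noncomputable def nullity {F : Type*} [Field F] {m n : Type*} [Fintype m] [Fintype n]
    (M : Matrix m n F) : ℕ :=
  Module.finrank F (LinearMap.ker M.mulVecLin)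

/-- Submatrix A[X,Y]: rows indexed by X, columns by Y. -/
def subm (A : Matrix V V F) (X Y : Finset V) : Matrix X Y F :=
  A.submatrix Subtype.val Subtype.val

/-- Principal pivot transform of A on Z, defined blockwise. -/
noncomputable def ppt (A : Matrix V V F) (Z : Finset V) : Matrix V V F :=
  fun i j =>
    if hi : i ∈ Z then
      if hj : j ∈ Z then (subm A Z Z)⁻¹ ⟨i, hi⟩ ⟨j, hj⟩
      else - ∑ k : Z, (subm A Z Z)⁻¹ ⟨i, hi⟩ k * A k j
    else
      if hj : j ∈ Z then ∑ k : Z, A i k * (subm A Z Z)⁻¹ k ⟨j, hj⟩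
      else A i j - ∑ k : Z, ∑ l : Z, A i k * (subm A Z Z)⁻¹ k l * A l j

def kerSpace (M : Matrix V V F) (X Y : Finset V) : Submodule F (V → F) where
  carrier := {x | (∀ j, j ∉ Y → x j = 0) ∧ ∀ i ∈ X, M.mulVec x i = 0}
  add_mem' := by
    rintro a b ⟨ha1, ha2⟩ ⟨hb1, hb2⟩
    refine ⟨fun j hj => by simp [ha1 j hj, hb1 j hj], fun i hi => ?_⟩
    simp [Matrix.mulVec_add, ha2 i hi, hb2 i hi]
  zero_mem' := ⟨fun j _ => rfl, fun i _ => by simp⟩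
  smul_mem' := by
    rintro c a ⟨ha1, ha2⟩
    exact ⟨fun j hj => by simp [ha1 j hj], fun i hi => by simp [Matrix.mulVec_smul, ha2 i hi]⟩

lemma mem_kerSpace {M : Matrix V V F} {X Y : Finset V} {x : V → F} :
    x ∈ kerSpace M X Y ↔ (∀ j, j ∉ Y → x j = 0) ∧ ∀ i ∈ X, M.mulVec x i = 0 := Iff.rfl

lemma sum_sub_Y {Y : Finset V} (f : V → F) (x : V → F) (hx : ∀ j ∉ Y, x j = 0) :
    ∑ j : Y, f j * x j = ∑ j, f j * x j := by
  rw [Finset.sum_coe_sort Y (fun j => f j * x j)]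
  exact Finset.sum_subset (Finset.subset_univ Y)
    (fun j _ hj => by rw [hx j hj, mul_zero])

lemma nullity_eq (M : Matrix V V F) (X Y : Finset V) :
    nullity (subm M X Y) = Module.finrank F (kerSpace M X Y) := by
  have hext : ∀ u : Y → F, ∀ j ∉ Y, (fun j => if h : j ∈ Y then u ⟨j, h⟩ else 0) j = 0 :=
    fun u j hj => dif_neg hj
  have hmv : ∀ (x : V → F), (∀ j ∉ Y, x j = 0) → ∀ i : X,
      (subm M X Y).mulVec (fun j : Y => x j) i = M.mulVec x i := by
    intro x hx i
    rw [Matrix.mulVec, Matrix.mulVec]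
    exact sum_sub_Y (fun j => M i j) x hx
  refine LinearEquiv.finrank_eq ?_
  exact
  { toFun := fun u => ⟨fun j => if h : j ∈ Y then u.1 ⟨j, h⟩ else 0, by
      refine ⟨hext u.1, fun i hi => ?_⟩
      have := hmv _ (hext u.1) ⟨i, hi⟩
      rw [← this]
      have hu : (fun j : Y => if h : (j : V) ∈ Y then u.1 ⟨j, h⟩ else 0) = u.1 := by
        funext j; rw [dif_pos j.2]
      rw [hu]
      have := u.2
      rw [LinearMap.mem_ker] at this
      exact congrFun (congrArg (fun f => f) this) ⟨i, hi⟩⟩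
    invFun := fun x => ⟨fun j => x.1 j, by
      rw [LinearMap.mem_ker]
      funext i
      rw [Matrix.mulVecLin_apply, hmv x.1 x.2.1 i]
      exact x.2.2 i i.2⟩
    map_add' := fun u v => by
      ext j; by_cases h : j ∈ Y <;> simp [h]
    map_smul' := fun c u => by
      ext j; by_cases h : j ∈ Y <;> simp [h]
    left_inv := fun u => by
      ext j; exact dif_pos j.2
    right_inv := fun x => by
      ext j
      show (if h : j ∈ Y then x.1 j else 0) = x.1 j
      by_cases h : j ∈ Y
      · exact dif_pos h
      · rw [dif_neg h, x.2.1 j h] }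


lemma lemA (A : Matrix V V F) {Z : Finset V} (hZ : IsUnit (subm A Z Z).det)
    (x : V → F) (k : Z) :
    ∑ l : Z, (subm A Z Z)⁻¹ k l * (∑ j ∈ Z, A ↑l j * x j) = x ↑k := by
  have h1 : ∀ l : Z, ∑ j ∈ Z, A ↑l j * x j = ∑ j : Z, A ↑l ↑j * x ↑j :=
    fun l => (Finset.sum_coe_sort Z _).symm
  simp_rw [h1, Finset.mul_sum]
  rw [Finset.sum_comm]
  have h2 : ∀ j : Z, ∑ l : Z, (subm A Z Z)⁻¹ k l * (A ↑l ↑j * x ↑j)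
      = (if k = j then (1:F) else 0) * x ↑j := by
    intro j
    simp_rw [← mul_assoc]
    rw [← Finset.sum_mul]
    congr 1
    have : ∑ l : Z, (subm A Z Z)⁻¹ k l * A ↑l ↑j
        = ((subm A Z Z)⁻¹ * subm A Z Z) k j := by
      rw [Matrix.mul_apply]; rfl
    rw [this, Matrix.nonsing_inv_mul _ hZ, Matrix.one_apply]
  simp_rw [h2, ite_mul, one_mul, zero_mul]
  simp

lemma lemB (A : Matrix V V F) {Z : Finset V} (hZ : IsUnit (subm A Z Z).det)
    (g : Z → F) (k : Z) :
    ∑ j : Z, A ↑k ↑j * (∑ l : Z, (subm A Z Z)⁻¹ j l * g l) = g k := by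
  simp_rw [Finset.mul_sum]
  rw [Finset.sum_comm]
  have h2 : ∀ l : Z, ∑ j : Z, A ↑k ↑j * ((subm A Z Z)⁻¹ j l * g l)
      = (if k = l then (1:F) else 0) * g l := by
    intro l
    simp_rw [← mul_assoc]
    rw [← Finset.sum_mul]
    congr 1
    have : ∑ j : Z, A ↑k ↑j * (subm A Z Z)⁻¹ j l
        = (subm A Z Z * (subm A Z Z)⁻¹) k l := by
      rw [Matrix.mul_apply]; rfl
    rw [this, Matrix.mul_nonsing_inv _ hZ, Matrix.one_apply]
  simp_rw [h2, ite_mul, one_mul, zero_mul]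
  simp

lemma lemC (A : Matrix V V F) {Z : Finset V} (hZ : IsUnit (subm A Z Z).det)
    (x : V → F) (l : Z) :
    ∑ j : Z, (subm A Z Z)⁻¹ l j * A.mulVec x ↑j
      = x ↑l + ∑ m ∈ Zᶜ, (∑ j : Z, (subm A Z Z)⁻¹ l j * A ↑j m) * x m := by
  have hmv : ∀ j : Z, A.mulVec x ↑j = (∑ m ∈ Z, A ↑j m * x m) + ∑ m ∈ Zᶜ, A ↑j m * x m := by
    intro j
    rw [Finset.sum_add_sum_compl]
    rfl
  simp_rw [hmv, mul_add, Finset.sum_add_distrib]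
  congr 1
  · exact lemA A hZ x l
  · simp_rw [Finset.mul_sum, ← mul_assoc]
    rw [Finset.sum_comm]
    simp_rw [Finset.sum_mul]

noncomputable def phiFun (A : Matrix V V F) (Z : Finset V) (x : V → F) : V → F :=
  fun k => if k ∈ Z then A.mulVec x k else x k

noncomputable def thetaFun (A : Matrix V V F) (Z : Finset V) (v : V → F) : V → F :=
  fun k => if h : k ∈ Z then
      ∑ l : Z, (subm A Z Z)⁻¹ ⟨k, h⟩ l * (v ↑l - ∑ j ∈ Zᶜ, A ↑l j * v j)
    else v k

lemma theta_phi (A : Matrix V V F) {Z : Finset V} (hZ : IsUnit (subm A Z Z).det)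
    (x : V → F) : thetaFun A Z (phiFun A Z x) = x := by
  funext k
  by_cases hk : k ∈ Z
  · rw [thetaFun, dif_pos hk]
    have h1 : ∀ l : Z, phiFun A Z x ↑l - ∑ j ∈ Zᶜ, A ↑l j * phiFun A Z x j
        = ∑ j ∈ Z, A ↑l j * x j := by
      intro l
      have hl : phiFun A Z x ↑l = A.mulVec x ↑l := if_pos l.2
      have hc : ∀ j ∈ Zᶜ, A ↑l j * phiFun A Z x j = A ↑l j * x j := by
        intro j hj
        rw [phiFun, if_neg (Finset.mem_compl.mp hj)]
      rw [hl, Finset.sum_congr rfl hc]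
      have : A.mulVec x ↑l = (∑ j ∈ Z, A ↑l j * x j) + ∑ j ∈ Zᶜ, A ↑l j * x j := by
        rw [Finset.sum_add_sum_compl]; rfl
      rw [this]; ring
    simp_rw [h1]
    exact lemA A hZ x ⟨k, hk⟩
  · rw [thetaFun, dif_neg hk, phiFun, if_neg hk]

lemma phi_theta (A : Matrix V V F) {Z : Finset V} (hZ : IsUnit (subm A Z Z).det)
    (v : V → F) : phiFun A Z (thetaFun A Z v) = v := by
  funext k
  by_cases hk : k ∈ Z
  · rw [phiFun, if_pos hk]
    have hmv : A.mulVec (thetaFun A Z v) k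
        = (∑ j ∈ Z, A k j * thetaFun A Z v j) + ∑ j ∈ Zᶜ, A k j * thetaFun A Z v j := by
      rw [Finset.sum_add_sum_compl]; rfl
    rw [hmv]
    have h1 : ∑ j ∈ Z, A k j * thetaFun A Z v j
        = ∑ j : Z, A k ↑j * (∑ l : Z, (subm A Z Z)⁻¹ j l * (v ↑l - ∑ m ∈ Zᶜ, A ↑l m * v m)) := by
      rw [← Finset.sum_coe_sort Z (fun j => A k j * thetaFun A Z v j)]
      refine Finset.sum_congr rfl (fun j _ => ?_)
      rw [thetaFun, dif_pos j.2]
    have h2 : ∑ j ∈ Zᶜ, A k j * thetaFun A Z v j = ∑ j ∈ Zᶜ, A k j * v j := by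
      refine Finset.sum_congr rfl (fun j hj => ?_)
      rw [thetaFun, dif_neg (Finset.mem_compl.mp hj)]
    rw [h1, h2, lemB A hZ _ ⟨k, hk⟩]
    ring
  · rw [phiFun, if_neg hk, thetaFun, dif_neg hk]

lemma ppt_mulVec (A : Matrix V V F) {Z : Finset V} (hZ : IsUnit (subm A Z Z).det)
    (x : V → F) (k : V) :
    (ppt A Z).mulVec (phiFun A Z x) k = if k ∈ Z then x k else A.mulVec x k := by
  have hsplit : (ppt A Z).mulVec (phiFun A Z x) k
      = (∑ j ∈ Z, ppt A Z k j * phiFun A Z x j)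
        + ∑ j ∈ Zᶜ, ppt A Z k j * phiFun A Z x j := by
    rw [Finset.sum_add_sum_compl]; rfl
  rw [hsplit]
  by_cases hk : k ∈ Z
  · rw [if_pos hk]
    have h1 : ∑ j ∈ Z, ppt A Z k j * phiFun A Z x j
        = ∑ j : Z, (subm A Z Z)⁻¹ ⟨k, hk⟩ j * A.mulVec x ↑j := by
      rw [← Finset.sum_coe_sort Z (fun j => ppt A Z k j * phiFun A Z x j)]
      refine Finset.sum_congr rfl (fun j _ => ?_)
      rw [ppt, dif_pos hk, dif_pos j.2, phiFun, if_pos j.2]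
    have h2 : ∑ j ∈ Zᶜ, ppt A Z k j * phiFun A Z x j
        = - ∑ j ∈ Zᶜ, (∑ l : Z, (subm A Z Z)⁻¹ ⟨k, hk⟩ l * A ↑l j) * x j := by
      rw [← Finset.sum_neg_distrib]
      refine Finset.sum_congr rfl (fun j hj => ?_)
      have hj' : j ∉ Z := Finset.mem_compl.mp hj
      rw [ppt, dif_pos hk, dif_neg hj', phiFun, if_neg hj']
      ring
    rw [h1, h2, lemC A hZ x ⟨k, hk⟩]
    ring
  · rw [if_neg hk]
    have h1 : ∑ j ∈ Z, ppt A Z k j * phiFun A Z x j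
        = ∑ j : Z, (∑ l : Z, A k ↑l * (subm A Z Z)⁻¹ l j) * A.mulVec x ↑j := by
      rw [← Finset.sum_coe_sort Z (fun j => ppt A Z k j * phiFun A Z x j)]
      refine Finset.sum_congr rfl (fun j _ => ?_)
      rw [ppt, dif_neg hk, dif_pos j.2, phiFun, if_pos j.2]
    have h2 : ∑ j ∈ Zᶜ, ppt A Z k j * phiFun A Z x j
        = ∑ j ∈ Zᶜ, (A k j - ∑ l : Z, ∑ m : Z, A k ↑l * (subm A Z Z)⁻¹ l m * A ↑m j) * x j := by
      refine Finset.sum_congr rfl (fun j hj => ?_)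
      have hj' : j ∉ Z := Finset.mem_compl.mp hj
      rw [ppt, dif_neg hk, dif_neg hj', phiFun, if_neg hj']
    rw [h1, h2]
    have h3 : ∑ j : Z, (∑ l : Z, A k ↑l * (subm A Z Z)⁻¹ l j) * A.mulVec x ↑j
        = ∑ l : Z, A k ↑l * (∑ j : Z, (subm A Z Z)⁻¹ l j * A.mulVec x ↑j) := by
      simp_rw [Finset.sum_mul, Finset.mul_sum]
      rw [Finset.sum_comm]
      simp_rw [mul_assoc]
    rw [h3]
    simp_rw [lemC A hZ x]
    have h4 : ∑ l : Z, A k ↑l * (x ↑l + ∑ m ∈ Zᶜ, (∑ j : Z, (subm A Z Z)⁻¹ l j * A ↑j m) * x m)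
        = (∑ l ∈ Z, A k l * x l)
          + ∑ m ∈ Zᶜ, (∑ l : Z, ∑ j : Z, A k ↑l * (subm A Z Z)⁻¹ l j * A ↑j m) * x m := by
      simp_rw [mul_add, Finset.sum_add_distrib]
      congr 1
      · exact Finset.sum_coe_sort Z (fun l => A k l * x l)
      · simp_rw [Finset.sum_mul, Finset.mul_sum, ← mul_assoc]
        rw [Finset.sum_comm]
    rw [h4]
    have h5 : ∑ j ∈ Zᶜ, (A k j - ∑ l : Z, ∑ m : Z, A k ↑l * (subm A Z Z)⁻¹ l m * A ↑m j) * x j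
        = (∑ j ∈ Zᶜ, A k j * x j)
          - ∑ j ∈ Zᶜ, (∑ l : Z, ∑ m : Z, A k ↑l * (subm A Z Z)⁻¹ l m * A ↑m j) * x j := by
      rw [← Finset.sum_sub_distrib]
      refine Finset.sum_congr rfl (fun j _ => ?_)
      ring
    rw [h5]
    have h6 : A.mulVec x k = (∑ j ∈ Z, A k j * x j) + ∑ j ∈ Zᶜ, A k j * x j := by
      rw [Finset.sum_add_sum_compl]; rfl
    rw [h6]
    ring


noncomputable def phiEquiv (A : Matrix V V F) {Z : Finset V}
    (hZ : IsUnit (subm A Z Z).det) : (V → F) ≃ₗ[F] (V → F) where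
  toFun := phiFun A Z
  invFun := thetaFun A Z
  map_add' x y := by
    funext k
    by_cases hk : k ∈ Z <;> simp [phiFun, hk, Matrix.mulVec_add]
  map_smul' c x := by
    funext k
    by_cases hk : k ∈ Z <;> simp [phiFun, hk, Matrix.mulVec_smul]
  left_inv := theta_phi A hZ
  right_inv := phi_theta A hZ

lemma ker_corr (A : Matrix V V F) {Z : Finset V} (hZ : IsUnit (subm A Z Z).det)
    (X Y : Finset V) (x : V → F) :
    x ∈ kerSpace A ((X \ Z) ∪ (Z \ Y)) ((Y \ Z) ∪ (Z \ X)) ↔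
      phiFun A Z x ∈ kerSpace (ppt A Z) X Y := by
  have hphi : ∀ j, phiFun A Z x j = if j ∈ Z then A.mulVec x j else x j := fun j => rfl
  have hB : ∀ i, (ppt A Z).mulVec (phiFun A Z x) i
      = if i ∈ Z then x i else A.mulVec x i := ppt_mulVec A hZ x
  simp only [mem_kerSpace, hphi, hB]
  constructor
  · rintro ⟨h1, h2⟩
    constructor
    · intro j hj
      by_cases hjZ : j ∈ Z
      · rw [if_pos hjZ]
        exact h2 j (Finset.mem_union_right _ (Finset.mem_sdiff.mpr ⟨hjZ, hj⟩))
      · rw [if_neg hjZ]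
        refine h1 j (fun hc => ?_)
        rcases Finset.mem_union.mp hc with h | h
        · exact hj (Finset.mem_sdiff.mp h).1
        · exact hjZ (Finset.mem_sdiff.mp h).1
    · intro i hi
      by_cases hiZ : i ∈ Z
      · rw [if_pos hiZ]
        refine h1 i (fun hc => ?_)
        rcases Finset.mem_union.mp hc with h | h
        · exact (Finset.mem_sdiff.mp h).2 hiZ
        · exact (Finset.mem_sdiff.mp h).2 hi
      · rw [if_neg hiZ]
        exact h2 i (Finset.mem_union_left _ (Finset.mem_sdiff.mpr ⟨hi, hiZ⟩))
  · rintro ⟨h1, h2⟩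
    constructor
    · intro j hj
      by_cases hjZ : j ∈ Z
      · have hjX : j ∈ X := by
          by_contra hjX
          exact hj (Finset.mem_union_right _ (Finset.mem_sdiff.mpr ⟨hjZ, hjX⟩))
        have := h2 j hjX
        rwa [if_pos hjZ] at this
      · have hjY : j ∉ Y := fun hc =>
          hj (Finset.mem_union_left _ (Finset.mem_sdiff.mpr ⟨hc, hjZ⟩))
        have := h1 j hjY
        rwa [if_neg hjZ] at this
    · intro i hi
      rcases Finset.mem_union.mp hi with h | h
      · obtain ⟨hiX, hiZ⟩ := Finset.mem_sdiff.mp h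
        have := h2 i hiX
        rwa [if_neg hiZ] at this
      · obtain ⟨hiZ, hiY⟩ := Finset.mem_sdiff.mp h
        have := h1 i hiY
        rwa [if_pos hiZ] at this

lemma nullity_ppt (A : Matrix V V F) {Z : Finset V} (hZ : IsUnit (subm A Z Z).det)
    (X Y : Finset V) :
    nullity (subm (ppt A Z) X Y)
      = nullity (subm A ((X \ Z) ∪ (Z \ Y)) ((Y \ Z) ∪ (Z \ X))) := by
  rw [nullity_eq, nullity_eq]
  have hmap : kerSpace (ppt A Z) X Y
      = (kerSpace A ((X \ Z) ∪ (Z \ Y)) ((Y \ Z) ∪ (Z \ X))).map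
          (phiEquiv A hZ).toLinearMap := by
    ext v
    rw [Submodule.mem_map]
    constructor
    · intro hv
      refine ⟨thetaFun A Z v, ?_, phi_theta A hZ v⟩
      rw [ker_corr A hZ]
      show phiFun A Z (thetaFun A Z v) ∈ _
      rwa [phi_theta A hZ v]
    · rintro ⟨x, hx, rfl⟩
      exact (ker_corr A hZ X Y x).mp hx
  rw [hmap, LinearEquiv.finrank_map_eq]

lemma sigma_invol (Z : Finset V) (X Y : Finset V) :
    ((((X \ Z) ∪ (Z \ Y)) \ Z) ∪ (Z \ ((Y \ Z) ∪ (Z \ X))) = X)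
    ∧ ((((Y \ Z) ∪ (Z \ X)) \ Z) ∪ (Z \ ((X \ Z) ∪ (Z \ Y))) = Y) := by
  constructor <;> (ext a; simp only [Finset.mem_union, Finset.mem_sdiff]; tauto)


/-- For each i, the number of submatrices of nullity i is invariant under PPT. -/
theorem card_nullity_ppt_invariant (A : Matrix V V F) (Z : Finset V)
    (hZ : IsUnit (subm A Z Z).det) (i : ℕ) :
    ((Finset.univ : Finset (Finset V × Finset V)).filter
        (fun p => nullity (subm A p.1 p.2) = i)).card =
    ((Finset.univ : Finset (Finset V × Finset V)).filter
        (fun p => nullity (subm (ppt A Z) p.1 p.2) = i)).card := by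
  
  refine Finset.card_bij' (fun p _ => ((p.1 \ Z) ∪ (Z \ p.2), (p.2 \ Z) ∪ (Z \ p.1)))
    (fun q _ => ((q.1 \ Z) ∪ (Z \ q.2), (q.2 \ Z) ∪ (Z \ q.1))) ?_ ?_ ?_ ?_
  · intro p hp
    rw [Finset.mem_filter] at hp ⊢
    refine ⟨Finset.mem_univ _, ?_⟩
    rw [nullity_ppt A hZ, (sigma_invol Z p.1 p.2).1, (sigma_invol Z p.1 p.2).2]
    exact hp.2
  · intro q hq
    rw [Finset.mem_filter] at hq ⊢
    refine ⟨Finset.mem_univ _, ?_⟩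
    rw [← nullity_ppt A hZ]
    exact hq.2
  · intro p _
    ext : 1 <;> simp only <;> [exact (sigma_invol Z p.1 p.2).1; exact (sigma_invol Z p.1 p.2).2]
  · intro q _
    ext : 1 <;> simp only <;> [exact (sigma_invol Z q.1 q.2).1; exact (sigma_invol Z q.1 q.2).2]
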